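/- arXiv:2207.08595 — 7 statements merged into one kernel-verified Lean document; each statement's English description precedes it below -/
import Mathlib

section
/- If every finite power X^k of a topological space X is star-Menger, then X has the star-Scheepers property. -/
open Set

/-- The dominating number 𝔡: least cardinality of a dominating family in ℕ^ℕ. -/
noncomputable def dominatingNumber : Cardinal :=
  sInf { c | ∃ D : Set (ℕ → ℕ),
    (∀ g : ℕ → ℕ, ∃ f ∈ D, ∀ᶠ n in Filter.atTop, g n ≤ f n) ∧ c = Cardinal.mk D }

/-- `U` is an open cover of the space `X`. -/
def IsOpenCover {X : Type*} [TopologicalSpace X] (U : Set (Set X)) : Prop :=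
  (∀ u ∈ U, IsOpen u) ∧ ⋃₀ U = Set.univ

/-- The star of a set `A` with respect to a family `U`. -/
def starOf {X : Type*} (A : Set X) (U : Set (Set X)) : Set X :=
  ⋃₀ {B | B ∈ U ∧ (A ∩ B).Nonempty}

/-- The star-Scheepers property (ω-cover form). -/
def StarScheepers (X : Type*) [TopologicalSpace X] : Prop :=
  ∀ U : ℕ → Set (Set X), (∀ n, IsOpenCover (U n)) →
    ∃ V : ℕ → Set (Set X), (∀ n, V n ⊆ U n ∧ (V n).Finite) ∧
      ∀ F : Set X, F.Finite → ∃ n, F ⊆ starOf (⋃₀ V n) (U n)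

/-- The strongly star-Scheepers property. -/
def StronglyStarScheepers (X : Type*) [TopologicalSpace X] : Prop :=
  ∀ U : ℕ → Set (Set X), (∀ n, IsOpenCover (U n)) →
    ∃ F : ℕ → Set X, (∀ n, (F n).Finite) ∧
      ∀ G : Set X, G.Finite → ∃ n, G ⊆ starOf (F n) (U n)

/-- The star-Menger property. -/
def StarMenger (X : Type*) [TopologicalSpace X] : Prop :=
  ∀ U : ℕ → Set (Set X), (∀ n, IsOpenCover (U n)) →
    ∃ V : ℕ → Set (Set X), (∀ n, V n ⊆ U n ∧ (V n).Finite) ∧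
      ∀ x : X, ∃ n, ∃ v ∈ V n, x ∈ starOf v (U n)

/-!
Enumerate a finite set `F ⊆ X` as a point `x` of `X^k`. Applying star-Menger in `X^k` to the covers
by boxes `∏ᵢ uᵢ` with `uᵢ ∈ U_n` yields finitely many boxes per stage, and if `x` lies in the star of
one of them then every coordinate `x i` lies in the star of the union of its factors. Interleaving the
countably many exponents `k` into a single sequence of stages with `Nat.pair` gives star-Scheepers.
-/

section BoxCover

variable {X : Type*}

def boxCover (ι : Type*) (U : Set (Set X)) : Set (Set (ι → X)) :=
  pi univ '' pi univ fun _ => U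

lemma starOf_mono {A B : Set X} (hAB : A ⊆ B) (U : Set (Set X)) : starOf A U ⊆ starOf B U :=
  sUnion_subset_sUnion fun _ ⟨hC, hAC⟩ => ⟨hC, hAC.mono (inter_subset_inter_left _ hAB)⟩

lemma apply_mem_starOf_of_mem_starOf_boxCover {ι : Type*} {U : Set (Set X)} {u : ι → Set X}
    {x : ι → X} (hx : x ∈ starOf (pi univ u) (boxCover ι U)) (i : ι) : x i ∈ starOf (u i) U := by
  obtain ⟨_, ⟨⟨w, hwU, rfl⟩, y, hyu, hyw⟩, hxw⟩ := hx
  exact ⟨w i, ⟨hwU i trivial, y i, hyu i trivial, hyw i trivial⟩, hxw i trivial⟩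

lemma IsOpenCover.boxCover [TopologicalSpace X] {ι : Type*} [Finite ι] {U : Set (Set X)}
    (hU : IsOpenCover U) : IsOpenCover (boxCover ι U) := by
  refine ⟨?_, eq_univ_of_forall fun x => ?_⟩
  · rintro _ ⟨u, hu, rfl⟩
    exact isOpen_set_pi finite_univ fun i _ => hU.1 _ (hu i trivial)
  · have hcov (i : ι) : ∃ t ∈ U, x i ∈ t := mem_sUnion.1 (hU.2 ▸ mem_univ (x i))
    choose t htU hxt using hcov
    exact ⟨pi univ t, ⟨t, fun i _ => htU i, rfl⟩, fun i _ => hxt i⟩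

lemma StarMenger.exists_finite_range_subset_starOf [TopologicalSpace X] {ι : Type*} [Finite ι]
    (h : StarMenger (ι → X)) {U : ℕ → Set (Set X)} (hU : ∀ n, IsOpenCover (U n)) :
    ∃ V : ℕ → Set (Set X), (∀ n, V n ⊆ U n ∧ (V n).Finite) ∧
      ∀ x : ι → X, ∃ n, range x ⊆ starOf (⋃₀ V n) (U n) := by
  obtain ⟨B, hB, hBstar⟩ := h (fun n => boxCover ι (U n)) fun n => (hU n).boxCover
  have hfactors (n : ℕ) : ∃ S ⊆ pi univ (fun _ => U n), S.Finite ∧ B n = pi univ '' S :=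
    exists_subset_image_finite_and.1 ⟨B n, (hB n).1, (hB n).2, rfl⟩
  choose S hSU hSfin hBS using hfactors
  refine ⟨fun n => ⋃ u ∈ S n, range u, fun n => ⟨?_, (hSfin n).biUnion fun _ _ => finite_range _⟩,
    fun x => ?_⟩
  · simp only [iUnion_subset_iff, range_subset_iff]
    exact fun u hu i => hSU n hu i trivial
  · obtain ⟨n, _, hv, hxv⟩ := hBstar x
    rw [hBS n] at hv
    obtain ⟨u, hu, rfl⟩ := hv
    refine ⟨n, range_subset_iff.2 fun i => starOf_mono ?_ _
      (apply_mem_starOf_of_mem_starOf_boxCover hxv i)⟩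
    exact subset_sUnion_of_mem (mem_biUnion hu (mem_range_self i))

end BoxCover

theorem stmt_4 {X : Type*} [TopologicalSpace X]
    (h : ∀ k : ℕ, StarMenger (Fin k → X)) :
    StarScheepers X := by
  intro U hU
  have hpower (k : ℕ) := (h k).exists_finite_range_subset_starOf fun m => hU (Nat.pair k m)
  choose V hV hVstar using hpower
  refine ⟨fun n => V n.unpair.1 n.unpair.2, fun n => ?_, fun F hF => ?_⟩
  · simpa only [Nat.pair_unpair] using hV n.unpair.1 n.unpair.2
  · obtain ⟨k, x, rfl⟩ := hF.fin_embedding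
    obtain ⟨m, hm⟩ := hVstar k x
    exact ⟨Nat.pair k m, by simpa only [Nat.unpair_pair] using hm⟩
end

section
/- Let X be a Lindelöf space that is a union of fewer than 𝔡 star-Hurewicz subspaces. Then X is star-Scheepers. -/
open Set

/-- The star-Hurewicz property. -/
def StarHurewicz (X : Type*) [TopologicalSpace X] : Prop :=
  ∀ U : ℕ → Set (Set X), (∀ n, IsOpenCover (U n)) →
    ∃ V : ℕ → Set (Set X), (∀ n, V n ⊆ U n ∧ (V n).Finite) ∧
      ∀ x : X, ∀ᶠ n in Filter.atTop, x ∈ starOf (⋃₀ V n) (U n)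

universe v

lemma aleph0_le_dominatingNumber : Cardinal.aleph0 ≤ dominatingNumber := by
  apply le_csInf
  · exact ⟨Cardinal.mk (Set.univ : Set (ℕ → ℕ)), Set.univ,
      fun g => ⟨g, Set.mem_univ g, Filter.Eventually.of_forall fun n => le_rfl⟩, rfl⟩
  · rintro c ⟨D, hdom, rfl⟩
    by_contra h
    push_neg at h
    have hfin : D.Finite := Cardinal.lt_aleph0_iff_set_finite.mp h
    obtain ⟨f, hfD, hev⟩ := hdom (fun n => (hfin.toFinset.sup fun f => f n) + 1)
    obtain ⟨n, hn⟩ := hev.exists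
    have hle : f n ≤ hfin.toFinset.sup fun f => f n :=
      Finset.le_sup (f := fun f => f n) (hfin.mem_toFinset.mpr hfD)
    have hn' : (hfin.toFinset.sup fun f => f n) + 1 ≤ f n := hn
    exact absurd (le_trans hn' hle) (Nat.not_succ_le_self _)

lemma finite_subset_range {α : Type*} (h : ℕ → α) (V : Set α)
    (hfin : V.Finite) (hsub : V ⊆ Set.range h) : ∃ m, V ⊆ h '' Set.Iio m := by
  classical
  have hch : ∀ v : V, ∃ k, h k = (v : α) := fun v => hsub v.2
  choose φ hφ using hch
  haveI : Finite V := hfin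
  obtain ⟨m, hm⟩ := Set.Finite.bddAbove (Set.finite_range φ)
  refine ⟨m + 1, fun x hx => ⟨φ ⟨x, hx⟩, ?_, hφ ⟨x, hx⟩⟩⟩
  exact Nat.lt_succ_of_le (hm (Set.mem_range_self _))

theorem stmt_10 {X : Type*} [TopologicalSpace X] [LindelofSpace X]
    {ι : Type v} (hι : Cardinal.lift.{0} (Cardinal.mk ι) < Cardinal.lift.{v} dominatingNumber)
    (S : ι → Set X) (hcov : ⋃ i, S i = Set.univ)
    (hH : ∀ i, StarHurewicz (S i)) :
    StarScheepers X := by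
  classical
  rcases isEmpty_or_nonempty X with hX | hX
  · intro U hU
    refine ⟨fun _ => ∅, fun n => ⟨empty_subset _, finite_empty⟩, fun F hF => ⟨0, ?_⟩⟩
    simp [Set.eq_empty_of_isEmpty F]
  intro U hU
  -- countable enumerated subcovers
  have henum : ∀ n, ∃ e : ℕ → Set X, (∀ k, e k ∈ U n) ∧ (⋃ k, e k) = univ := by
    intro n
    obtain ⟨hUo, hUc⟩ := hU n
    have hcover : (univ : Set X) ⊆ ⋃ u : (U n), (u : Set X) := by
      rw [← Set.sUnion_eq_iUnion, hUc]
    obtain ⟨r, hrc, hrcov⟩ := isLindelof_univ.elim_countable_subcover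
      (fun u : (U n) => (u : Set X)) (fun u => hUo u u.2) hcover
    have hCne : ((fun u : (U n) => (u : Set X)) '' r).Nonempty := by
      have hx0 := hrcov (Set.mem_univ hX.some)
      simp only [Set.mem_iUnion] at hx0
      obtain ⟨u, hur, _⟩ := hx0
      exact ⟨u, Set.mem_image_of_mem _ hur⟩
    obtain ⟨f, hf⟩ := (hrc.image (fun u : (U n) => (u : Set X))).exists_eq_range hCne
    refine ⟨f, ?_, ?_⟩
    · intro k
      have : f k ∈ (fun u : (U n) => (u : Set X)) '' r := hf ▸ Set.mem_range_self k
      obtain ⟨u, _, hu⟩ := this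
      exact hu ▸ u.2
    · apply Set.eq_univ_of_univ_subset
      intro x hx
      have hx2 := hrcov hx
      simp only [Set.mem_iUnion] at hx2
      obtain ⟨u, hur, hxu⟩ := hx2
      have : (u : Set X) ∈ Set.range f := hf ▸ Set.mem_image_of_mem _ hur
      obtain ⟨k, hk⟩ := this
      exact Set.mem_iUnion.mpr ⟨k, hk ▸ hxu⟩
  choose e he hecov using henum
  -- apply star-Hurewicz on each subspace with restricted covers
  have hsub : ∀ (i : ι), ∃ V : ℕ → Set (Set (S i)),
      (∀ n, V n ⊆ Set.range (fun k => ((↑) : S i → X) ⁻¹' (e n k)) ∧ (V n).Finite) ∧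
      ∀ x : S i, ∀ᶠ n in Filter.atTop,
        x ∈ starOf (⋃₀ V n) (Set.range (fun k => ((↑) : S i → X) ⁻¹' (e n k))) := by
    intro i
    apply hH i
    intro n
    constructor
    · rintro u ⟨k, rfl⟩
      exact ((hU n).1 _ (he n k)).preimage continuous_subtype_val
    · rw [Set.sUnion_range, ← Set.preimage_iUnion, hecov n, Set.preimage_univ]
  choose V hVsub hVstar using hsub
  -- bounds
  have hbnd : ∀ i n, ∃ m, V i n ⊆ (fun k => ((↑) : S i → X) ⁻¹' (e n k)) '' Set.Iio m :=
    fun i n => finite_subset_range _ _ (hVsub i n).2 (hVsub i n).1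
  choose fval hfval using hbnd
  set fJ : Finset ι → ℕ → ℕ := fun J n => J.sup (fun i => fval i n) with hfJ
  -- the family {fJ J} is small, hence not dominating
  have hsmall : Cardinal.mk (Set.range fJ) < dominatingNumber := by
    have h1 : Cardinal.lift.{v} (Cardinal.mk (Set.range fJ)) ≤
        Cardinal.lift.{0} (Cardinal.mk (Finset ι)) := Cardinal.mk_range_le_lift
    rcases finite_or_infinite ι with hfin | hinf
    · haveI := Fintype.ofFinite ι
      have h2 : Cardinal.mk (Set.range fJ) < Cardinal.aleph0 :=
        Cardinal.lt_aleph0_iff_set_finite.mpr (Set.finite_range fJ)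
      exact lt_of_lt_of_le h2 aleph0_le_dominatingNumber
    · have h2 : Cardinal.mk (Finset ι) = Cardinal.mk ι := Cardinal.mk_finset_of_infinite ι
      have h3 : Cardinal.lift.{v} (Cardinal.mk (Set.range fJ)) <
          Cardinal.lift.{v} dominatingNumber := by
        refine lt_of_le_of_lt h1 ?_
        rw [h2]
        exact hι
      exact Cardinal.lift_lt.mp h3
  have hnotdom : ∃ g : ℕ → ℕ, ∀ J : Finset ι, ∃ᶠ n in Filter.atTop, fJ J n < g n := by
    by_contra hcon
    push_neg at hcon
    have hdom : ∀ g : ℕ → ℕ, ∃ f ∈ Set.range fJ, ∀ᶠ n in Filter.atTop, g n ≤ f n := by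
      intro g
      obtain ⟨J, hJ⟩ := hcon g
      exact ⟨fJ J, Set.mem_range_self J, hJ⟩
    have hmem : Cardinal.mk (Set.range fJ) ∈ { c | ∃ D : Set (ℕ → ℕ),
        (∀ g : ℕ → ℕ, ∃ f ∈ D, ∀ᶠ n in Filter.atTop, g n ≤ f n) ∧ c = Cardinal.mk D } :=
      ⟨Set.range fJ, hdom, rfl⟩
    exact absurd (csInf_le' hmem) (not_le.mpr hsmall)
  obtain ⟨g, hg⟩ := hnotdom
  -- final selection
  refine ⟨fun n => (e n) '' Set.Iio (g n), fun n => ⟨?_, (Set.finite_Iio _).image _⟩, ?_⟩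
  · rintro u ⟨k, _, rfl⟩; exact he n k
  intro F hF
  have hidx : ∀ x : X, ∃ i, x ∈ S i := fun x => Set.mem_iUnion.mp (hcov ▸ Set.mem_univ x)
  choose idx hidxmem using hidx
  set J : Finset ι := hF.toFinset.image idx with hJdef
  have hEv : ∀ᶠ n in Filter.atTop, ∀ x ∈ F,
      (⟨x, hidxmem x⟩ : S (idx x)) ∈ starOf (⋃₀ V (idx x) n)
        (Set.range fun k => ((↑) : S (idx x) → X) ⁻¹' (e n k)) :=
    (Filter.eventually_all_finite hF).mpr fun x _ => hVstar (idx x) ⟨x, hidxmem x⟩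
  obtain ⟨n, hn1, hn2⟩ := ((hg J).and_eventually hEv).exists
  refine ⟨n, fun x hxF => ?_⟩
  obtain ⟨B, ⟨⟨k₀, hk₀⟩, hBne⟩, hxB⟩ := hn2 x hxF
  obtain ⟨y, hyA, hyB⟩ := hBne
  obtain ⟨vv, hvV, hyv⟩ := hyA
  obtain ⟨k₁, hk₁lt, hk₁⟩ := hfval (idx x) n hvV
  have hik : idx x ∈ J := Finset.mem_image_of_mem idx (hF.mem_toFinset.mpr hxF)
  have hle2 : fval (idx x) n ≤ fJ J n := Finset.le_sup (f := fun i => fval i n) hik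
  have hlt : k₁ < g n := lt_of_lt_of_le hk₁lt (le_trans hle2 (le_of_lt hn1))
  have hyk1 : (y : X) ∈ e n k₁ := by
    have h' : y ∈ (fun k => ((↑) : S (idx x) → X) ⁻¹' (e n k)) k₁ := by
      rw [← hk₁] at hyv; exact hyv
    exact h'
  have hyW : (y : X) ∈ ⋃₀ ((e n) '' Set.Iio (g n)) :=
    ⟨e n k₁, ⟨k₁, hlt, rfl⟩, hyk1⟩
  have hyk0 : (y : X) ∈ e n k₀ := by
    have h' : y ∈ (fun k => ((↑) : S (idx x) → X) ⁻¹' (e n k)) k₀ := by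
      rw [← hk₀] at hyB; exact hyB
    exact h'
  have hxk0 : x ∈ e n k₀ := by
    have h' : (⟨x, hidxmem x⟩ : S (idx x)) ∈ (fun k => ((↑) : S (idx x) → X) ⁻¹' (e n k)) k₀ := by
      rw [← hk₀] at hxB; exact hxB
    exact h'
  show x ∈ ⋃₀ {B | B ∈ U n ∧ ((⋃₀ ((e n) '' Set.Iio (g n))) ∩ B).Nonempty}
  exact ⟨e n k₀, ⟨he n k₀, ⟨(y : X), hyW, hyk0⟩⟩, hxk0⟩
end

section
/- A topological space X is Scheepers if and only if its Alexandroff duplicate AD(X) is Scheepers. -/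
open Set

/-- The topology of the Alexandroff duplicate AD(X) on X × Bool:
points (x, true) are isolated, and basic neighbourhoods of (x, false)
are (U × {false,true}) \ {(x, true)} for U an open neighbourhood of x. -/
def ADTop (X : Type*) [TopologicalSpace X] : TopologicalSpace (X × Bool) :=
  TopologicalSpace.generateFrom
    ({S | ∃ x : X, S = {(x, true)}} ∪
     {S | ∃ (x : X) (U : Set X), IsOpen U ∧ x ∈ U ∧
        S = (U ×ˢ (Set.univ : Set Bool)) \ {(x, true)}})


/-- The Scheepers property U_fin(O, Ω). -/
def Scheepers (X : Type*) [TopologicalSpace X] : Prop :=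
  ∀ U : ℕ → Set (Set X), (∀ n, IsOpenCover (U n)) →
    ∃ V : ℕ → Set (Set X), (∀ n, V n ⊆ U n ∧ (V n).Finite) ∧
      ((∃ n, ⋃₀ V n = Set.univ) ∨
        ∀ F : Set X, F.Finite → ∃ n, F ⊆ ⋃₀ V n)


/-!
Scheepers' property passes to continuous images, which gives it for `X` as the image of
`AD(X)` under the projection. Conversely, every open neighbourhood of `(x, 0)` in `AD(X)`
contains `(u × {0,1})` minus finitely many isolated points, for some open `u ∋ x`; so for an
open cover of `AD(X)` the open sets `u ⊆ X` with `u × {0,1}` covered by finitely many members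
form an open cover of `X`, and a Scheepers selection from these traced covers lifts to `AD(X)`.
-/

open Function Topology TopologicalSpace

theorem Scheepers.image {X Y : Type*} {_ : TopologicalSpace X} {_ : TopologicalSpace Y}
    (hX : Scheepers X) {f : X → Y} (hf : Continuous f) (hsurj : Surjective f) :
    Scheepers Y := by
  intro U hU
  obtain ⟨W, hWU, hW⟩ := hX (fun n => preimage f '' U n) fun n =>
    ⟨by rintro _ ⟨u, hu, rfl⟩; exact ((hU n).1 u hu).preimage hf, by
      rw [sUnion_image, ← preimage_iUnion₂, ← sUnion_eq_biUnion, (hU n).2, preimage_univ]⟩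
  let V n := U n ∩ preimage f ⁻¹' W n
  have hV : ∀ n, V n ⊆ U n ∧ (V n).Finite := fun n =>
    ⟨inter_subset_left,
      ((hWU n).2.preimage hsurj.preimage_injective.injOn).subset inter_subset_right⟩
  have hWV : ∀ n, ⋃₀ W n ⊆ f ⁻¹' ⋃₀ V n := by
    rintro n y ⟨w, hw, hyw⟩
    obtain ⟨u, hu, rfl⟩ := (hWU n).1 hw
    exact ⟨u, ⟨hu, hw⟩, hyw⟩
  refine ⟨V, hV, ?_⟩
  rcases hW with ⟨n, hn⟩ | hW
  · refine Or.inl ⟨n, hsurj.preimage_injective ?_⟩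
    rw [preimage_univ, ← univ_subset_iff, ← hn]
    exact hWV n
  · refine Or.inr fun F hF => ?_
    obtain ⟨n, hn⟩ := hW (surjInv hsurj '' F) (hF.image _)
    refine ⟨n, fun y hy => ?_⟩
    rw [← surjInv_eq hsurj y]
    exact hWV n (hn (mem_image_of_mem _ hy))

theorem Scheepers.preimage {X Y : Type*} {_ : TopologicalSpace X} {_ : TopologicalSpace Y}
    (hX : Scheepers X) (f : Y → X)
    (hf : ∀ W : Set (Set Y), IsOpenCover W → ∀ x, ∃ u, IsOpen u ∧ x ∈ u ∧
      ∃ F ⊆ W, F.Finite ∧ f ⁻¹' u ⊆ ⋃₀ F) :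
    Scheepers Y := by
  intro W hW
  let U n := {u : Set X | IsOpen u ∧ ∃ F ⊆ W n, F.Finite ∧ f ⁻¹' u ⊆ ⋃₀ F}
  have hU : ∀ n, IsOpenCover (U n) := fun n =>
    ⟨fun u hu => hu.1, eq_univ_of_forall fun x => by
      obtain ⟨u, hu, hxu, hF⟩ := hf (W n) (hW n) x
      exact ⟨u, ⟨hu, hF⟩, hxu⟩⟩
  obtain ⟨V, hVU, hV⟩ := hX U hU
  choose! F hFW hFfin hFcov using fun n u (hu : u ∈ V n) => ((hVU n).1 hu).2
  refine ⟨fun n => ⋃ u ∈ V n, F n u, fun n =>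
    ⟨iUnion₂_subset fun u hu => hFW n u hu, (hVU n).2.biUnion fun u hu => hFfin n u hu⟩, ?_⟩
  have hVF : ∀ n, f ⁻¹' ⋃₀ V n ⊆ ⋃₀ ⋃ u ∈ V n, F n u := by
    rintro n y ⟨u, hu, hyu⟩
    exact sUnion_mono (subset_biUnion_of_mem (u := F n) hu) (hFcov n u hu hyu)
  rcases hV with ⟨n, hn⟩ | hV
  · refine Or.inl ⟨n, univ_subset_iff.1 ?_⟩
    simpa only [hn, preimage_univ] using hVF n
  · refine Or.inr fun G hG => ?_
    obtain ⟨n, hn⟩ := hV (f '' G) (hG.image f)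
    exact ⟨n, (image_subset_iff.1 hn).trans (hVF n)⟩

section AlexandroffDuplicate

variable {X : Type*} [TopologicalSpace X]

theorem continuous_fst_ADTop : Continuous[ADTop X, _] (Prod.fst : X × Bool → X) := by
  refine (@continuous_def _ _ (ADTop X) _ _).2 fun u hu => ?_
  refine (@isOpen_iff_forall_mem_open (X × Bool) (ADTop X)).2 ?_
  rintro ⟨x, b⟩ (hx : x ∈ u)
  cases b
  · refine ⟨u ×ˢ univ \ {(x, true)}, fun p hp => hp.1.1, ?_, ⟨⟨hx, trivial⟩, by simp⟩⟩
    exact GenerateOpen.basic _ (Or.inr ⟨x, u, hu, hx, rfl⟩)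
  · refine ⟨{(x, true)}, singleton_subset_iff.2 hx, ?_, rfl⟩
    exact GenerateOpen.basic _ (Or.inl ⟨x, rfl⟩)

theorem exists_prod_univ_diff_subset_of_isOpen_ADTop {W : Set (X × Bool)}
    (hW : IsOpen[ADTop X] W) {x : X} (hxW : (x, false) ∈ W) :
    ∃ u, IsOpen u ∧ x ∈ u ∧ ∃ E : Set X, E.Finite ∧
      u ×ˢ (univ : Set Bool) \ E ×ˢ {true} ⊆ W := by
  induction hW generalizing x with
  | basic s hs =>
    rcases hs with ⟨y, rfl⟩ | ⟨y, u, hu, -, rfl⟩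
    · simp at hxW
    · refine ⟨u, hu, hxW.1.1, {y}, finite_singleton y, ?_⟩
      rintro ⟨z, b⟩ ⟨hzu, hzb⟩
      exact ⟨hzu, fun h => hzb (by simp_all)⟩
  | univ => exact ⟨univ, isOpen_univ, trivial, ∅, finite_empty, subset_univ _⟩
  | inter s t _ _ ihs iht =>
    obtain ⟨u, hu, hxu, E, hE, hs⟩ := ihs hxW.1
    obtain ⟨v, hv, hxv, F, hF, ht⟩ := iht hxW.2
    refine ⟨u ∩ v, hu.inter hv, ⟨hxu, hxv⟩, E ∪ F, hE.union hF, ?_⟩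
    rintro ⟨z, b⟩ ⟨⟨⟨hzu, hzv⟩, -⟩, hzEF⟩
    exact ⟨hs ⟨⟨hzu, trivial⟩, fun h => hzEF ⟨Or.inl h.1, h.2⟩⟩,
      ht ⟨⟨hzv, trivial⟩, fun h => hzEF ⟨Or.inr h.1, h.2⟩⟩⟩
  | sUnion S _ ih =>
    obtain ⟨s, hsS, hxs⟩ := hxW
    obtain ⟨u, hu, hxu, E, hE, hsub⟩ := ih s hsS hxs
    exact ⟨u, hu, hxu, E, hE, hsub.trans (subset_sUnion_of_mem hsS)⟩

theorem exists_finite_subcover_fst_preimage_ADTop {W : Set (Set (X × Bool))}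
    (hW : @IsOpenCover _ (ADTop X) W) (x : X) :
    ∃ u, IsOpen u ∧ x ∈ u ∧ ∃ F ⊆ W, F.Finite ∧ Prod.fst ⁻¹' u ⊆ ⋃₀ F := by
  have hcov : ∀ p, ∃ w ∈ W, p ∈ w := fun p => mem_sUnion.1 (hW.2 ▸ mem_univ p)
  obtain ⟨w₀, hw₀, hxw₀⟩ := hcov (x, false)
  obtain ⟨u, hu, hxu, E, hE, hsub⟩ :=
    exists_prod_univ_diff_subset_of_isOpen_ADTop (hW.1 w₀ hw₀) hxw₀
  choose w hwW hpw using hcov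
  refine ⟨u, hu, hxu, insert w₀ ((fun e => w (e, true)) '' E), ?_, (hE.image _).insert w₀, ?_⟩
  · rintro _ (rfl | ⟨e, -, rfl⟩)
    exacts [hw₀, hwW _]
  · rintro ⟨z, b⟩ hz
    by_cases hzE : z ∈ E ∧ b = true
    · obtain ⟨hzE, rfl⟩ := hzE
      exact ⟨w (z, true), mem_insert_of_mem _ ⟨z, hzE, rfl⟩, hpw _⟩
    · exact ⟨w₀, mem_insert w₀ _, hsub ⟨⟨hz, trivial⟩, fun h => hzE ⟨h.1, h.2⟩⟩⟩

end AlexandroffDuplicate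

theorem stmt_12 {X : Type*} [TopologicalSpace X] :
    Scheepers X ↔ @Scheepers (X × Bool) (ADTop X) :=
  ⟨fun h => h.preimage Prod.fst fun _ hW => exists_finite_subcover_fst_preimage_ADTop hW,
    fun h => h.image continuous_fst_ADTop Prod.fst_surjective⟩
end

section
/- If f : X → Y is an open perfect (closed, continuous, surjective, with compact fibers) mapping onto a star-Scheepers space Y, then X is star-Scheepers. -/
open Set

/-!
Given open covers `𝒰ₙ` of `X`, cover each compact fiber `f⁻¹(y)` by a finite `𝒯ₙ(y) ⊆ 𝒰ₙ` whose
members all meet the fiber. Since `f` is closed and open, `y` has an open neighbourhood `Vₙ(y)`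
with `f⁻¹(Vₙ(y)) ⊆ ⋃ 𝒯ₙ(y)` and `Vₙ(y) ⊆ f(u)` for every `u ∈ 𝒯ₙ(y)`. Applying the star-Scheepers
property of `Y` to the covers `{Vₙ(y)}` yields finitely many points `yᵢ` per `n`; the union of
the `𝒯ₙ(yᵢ)` is the required finite subfamily of `𝒰ₙ`: if `f(x) ∈ Vₙ(z)` meets some `Vₙ(yᵢ)` at
`f(q)` with `q ∈ u ∈ 𝒯ₙ(z)`, `x ∈ u`, then `q ∈ ⋃ 𝒯ₙ(yᵢ)`, so `u` witnesses that `x` lies in the star.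
-/

theorem IsCompact.exists_finite_subcover_meeting {X : Type*} [TopologicalSpace X]
    {K : Set X} (hK : IsCompact K) {U : Set (Set X)} (hU : ∀ u ∈ U, IsOpen u)
    (hKU : K ⊆ ⋃₀ U) :
    ∃ T ⊆ U, T.Finite ∧ K ⊆ ⋃₀ T ∧ ∀ u ∈ T, (u ∩ K).Nonempty := by
  rw [sUnion_eq_biUnion] at hKU
  obtain ⟨T, hTU, hTfin, hKT⟩ := hK.elim_finite_subcover_image (c := id) hU hKU
  refine ⟨{u ∈ T | (u ∩ K).Nonempty}, fun u hu => hTU hu.1, hTfin.sep _, ?_, fun u hu => hu.2⟩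
  intro x hx
  obtain ⟨u, hu, hxu⟩ := mem_iUnion₂.1 (hKT hx)
  exact ⟨u, ⟨hu, x, hxu, hx⟩, hxu⟩

theorem IsClosedMap.exists_finite_cover_and_nhd_of_isOpenMap {X Y : Type*} [TopologicalSpace X]
    [TopologicalSpace Y] {f : X → Y} (hclosed : IsClosedMap f) (hopen : IsOpenMap f)
    {U : Set (Set X)} (hU : ∀ u ∈ U, IsOpen u) {y : Y} (hfib : IsCompact (f ⁻¹' {y}))
    (hcov : f ⁻¹' {y} ⊆ ⋃₀ U) :
    ∃ T ⊆ U, T.Finite ∧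
      ∃ V, IsOpen V ∧ y ∈ V ∧ f ⁻¹' V ⊆ ⋃₀ T ∧ ∀ u ∈ T, V ⊆ f '' u := by
  obtain ⟨T, hTU, hTfin, hfibT, hTmeet⟩ := hfib.exists_finite_subcover_meeting hU hcov
  have hTopen : ∀ u ∈ T, IsOpen u := fun u hu => hU u (hTU hu)
  refine ⟨T, hTU, hTfin, (f '' (⋃₀ T)ᶜ)ᶜ ∩ ⋂ u ∈ T, f '' u, ?_, ⟨?_, ?_⟩, ?_, ?_⟩
  · exact (hclosed _ (isOpen_sUnion hTopen).isClosed_compl).isOpen_compl.inter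
      (hTfin.isOpen_biInter fun u hu => hopen u (hTopen u hu))
  · rintro ⟨x, hxT, rfl⟩
    exact hxT (hfibT rfl)
  · exact mem_iInter₂.2 hTmeet
  · intro x hx
    by_contra hxT
    exact hx.1 ⟨x, hxT, rfl⟩
  · exact fun u hu => inter_subset_right.trans (biInter_subset_of_mem hu)

theorem StarScheepers.exists_finite_indices {Y ι : Type*} [TopologicalSpace Y]
    (hY : StarScheepers Y) (V : ℕ → ι → Set Y) (hV : ∀ n i, IsOpen (V n i))
    (hcov : ∀ n, ⋃ i, V n i = univ) :
    ∃ S : ℕ → Set ι, (∀ n, (S n).Finite) ∧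
      ∀ F : Set Y, F.Finite → ∃ n, F ⊆ starOf (⋃ i ∈ S n, V n i) (range (V n)) := by
  obtain ⟨W, hW, hstar⟩ := hY (fun n => range (V n))
    fun n => ⟨by rintro _ ⟨i, rfl⟩; exact hV n i, by rw [sUnion_range, hcov n]⟩
  have hindex (n : ℕ) : ∃ S : Set ι, S.Finite ∧ W n = V n '' S := by
    obtain ⟨S, -, hS⟩ := exists_subset_image_finite_and.1
      ⟨W n, by rw [image_univ]; exact (hW n).1, (hW n).2, rfl⟩
    exact ⟨S, hS⟩
  choose S hSfin hSW using hindex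
  refine ⟨S, hSfin, fun F hF => ?_⟩
  simpa only [← sUnion_image, ← hSW] using hstar F hF

theorem preimage_starOf_subset_starOf {X Y ι : Type*} (f : X → Y) {U : Set (Set X)}
    {T : ι → Set (Set X)} {V : ι → Set Y} (hTU : ∀ i, T i ⊆ U)
    (hpre : ∀ i, f ⁻¹' V i ⊆ ⋃₀ T i) (himg : ∀ i, ∀ u ∈ T i, V i ⊆ f '' u) (S : Set ι) :
    f ⁻¹' starOf (⋃ i ∈ S, V i) (range V) ⊆ starOf (⋃₀ ⋃ i ∈ S, T i) U := by
  rintro x ⟨_, ⟨⟨j, rfl⟩, w, hwS, hwj⟩, hxj⟩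
  obtain ⟨i, hiS, hwi⟩ := mem_iUnion₂.1 hwS
  obtain ⟨u, hu, hxu⟩ := hpre j hxj
  obtain ⟨q, hqu, rfl⟩ := himg j u hu hwj
  obtain ⟨u', hu', hqu'⟩ := hpre i hwi
  exact ⟨u, ⟨hTU j hu, q, ⟨u', mem_iUnion₂.2 ⟨i, hiS, hu'⟩, hqu'⟩, hqu⟩, hxu⟩

theorem stmt_15_general {X Y : Type*} [TopologicalSpace X] [TopologicalSpace Y]
    (f : X → Y) (hclosed : IsClosedMap f)
    (hopen : IsOpenMap f)
    (hfib : ∀ y : Y, IsCompact (f ⁻¹' {y}))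
    (hY : StarScheepers Y) :
    StarScheepers X := by
  intro U hU
  have hlocal n y := hclosed.exists_finite_cover_and_nhd_of_isOpenMap hopen (hU n).1 (hfib y)
    ((hU n).2 ▸ subset_univ _)
  choose T hTU hTfin V hVopen hyV hpre himg using hlocal
  obtain ⟨S, hSfin, hstar⟩ := hY.exists_finite_indices V hVopen
    fun n => eq_univ_of_forall fun y => mem_iUnion.2 ⟨y, hyV n y⟩
  refine ⟨fun n => ⋃ y ∈ S n, T n y,
    fun n => ⟨iUnion₂_subset fun y _ => hTU n y, (hSfin n).biUnion fun y _ => hTfin n y⟩,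
    fun G hG => ?_⟩
  obtain ⟨n, hn⟩ := hstar (f '' G) (hG.image f)
  exact ⟨n, (subset_preimage_image f G).trans <|
    (preimage_mono hn).trans (preimage_starOf_subset_starOf f (hTU n) (hpre n) (himg n) (S n))⟩

theorem stmt_15 {X Y : Type*} [TopologicalSpace X] [TopologicalSpace Y]
    (f : X → Y) (hcont : Continuous f) (hclosed : IsClosedMap f)
    (hopen : IsOpenMap f) (hsurj : Function.Surjective f)
    (hfib : ∀ y : Y, IsCompact (f ⁻¹' {y}))
    (hY : StarScheepers Y) :
    StarScheepers X :=
  stmt_15_general f hclosed hopen hfib hY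
end

section
/- If X is a star-Scheepers space and Y is a σ-compact space, then the product X × Y is star-Scheepers. -/
open Set

/-
Fix a compact `K ⊆ Y`. By the tube lemma every `x ∈ X` has an open neighbourhood `V` such that
`V ×ˢ K` is covered by finitely many members of a given open cover, each meeting every fibre
`{x'} ×ˢ K` with `x' ∈ V`. These neighbourhoods form an open cover of `X`, to which the
star-Scheepers property of `X` applies; because each tube member meets every fibre, a star in
`X` lifts to a star in `X × K`. Then `X × Y` is the increasing union of the sets `X × Kₘ`, and
a diagonal choice along `Nat.pair` combines the selections made for each `m`.
-/

section

variable {X Y Z : Type*}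

section Relative

variable [TopologicalSpace Z]

/-- Stars are taken in the ambient space `Z`: this is the relative property of `S ⊆ Z`, not the
star-Scheepers property of the subspace `S`. -/
def IsStarScheepers (S : Set Z) : Prop :=
  ∀ U : ℕ → Set (Set Z), (∀ n, IsOpenCover (U n)) →
    ∃ V : ℕ → Set (Set Z), (∀ n, V n ⊆ U n ∧ (V n).Finite) ∧
      ∀ F ⊆ S, F.Finite → ∃ n, F ⊆ starOf (⋃₀ V n) (U n)

theorem isStarScheepers_univ_iff : IsStarScheepers (univ : Set Z) ↔ StarScheepers Z := by
  simp only [IsStarScheepers, StarScheepers, subset_univ, true_imp_iff]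

theorem IsStarScheepers.iUnion {S : ℕ → Set Z} (hS : Directed (· ⊆ ·) S)
    (h : ∀ m, IsStarScheepers (S m)) : IsStarScheepers (⋃ m, S m) := by
  intro U hU
  choose V hV hVstar using fun m => h m (fun n => U (Nat.pair m n)) fun n => hU _
  refine ⟨fun k => V k.unpair.1 k.unpair.2, fun k => ?_, fun F hFS hF => ?_⟩
  · simpa only [Nat.pair_unpair] using hV k.unpair.1 k.unpair.2
  · lift F to Finset Z using hF
    obtain ⟨m, hFm⟩ := hS.exists_mem_subset_of_finset_subset_biUnion hFS
    obtain ⟨n, hn⟩ := hVstar m F hFm F.finite_toSet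
    exact ⟨Nat.pair m n, by simpa only [Nat.unpair_pair] using hn⟩

end Relative

structure IsTubeCover (U : Set (Set (X × Y))) (K : Set Y) (V : Set X) (𝒰 : Set (Set (X × Y))) :
    Prop where
  subset : 𝒰 ⊆ U
  finite : 𝒰.Finite
  prod_subset_sUnion : V ×ˢ K ⊆ ⋃₀ 𝒰
  exists_mem_of_mem : ∀ u ∈ 𝒰, ∀ x ∈ V, ∃ y ∈ K, (x, y) ∈ u

theorem IsTubeCover.mem_starOf {U 𝒰 : Set (Set (X × Y))} {K : Set Y} {V : Set X}
    {A : Set (X × Y)} {q x : X} {y : Y} (h𝒰 : IsTubeCover U K V 𝒰) (hqA : {q} ×ˢ K ⊆ A)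
    (hq : q ∈ V) (hx : x ∈ V) (hy : y ∈ K) : (x, y) ∈ starOf A U := by
  obtain ⟨u, hu𝒰, hxyu⟩ := h𝒰.prod_subset_sUnion (mk_mem_prod hx hy)
  obtain ⟨y', hy', hqy'⟩ := h𝒰.exists_mem_of_mem u hu𝒰 q hq
  exact ⟨u, ⟨h𝒰.subset hu𝒰, (q, y'), hqA (mk_mem_prod rfl hy'), hqy'⟩, hxyu⟩

section Tube

variable [TopologicalSpace X] [TopologicalSpace Y]

theorem isOpen_setOf_exists_mem_prod {w : Set (X × Y)} (hw : IsOpen w) (K : Set Y) :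
    IsOpen {x | ∃ y ∈ K, (x, y) ∈ w} := by
  have : {x | ∃ y ∈ K, (x, y) ∈ w} = ⋃ y ∈ K, (·, y) ⁻¹' w := by ext; simp
  rw [this]
  exact isOpen_biUnion fun y _ => hw.preimage (by fun_prop)

theorem exists_isTubeCover {U : Set (Set (X × Y))} (hU : IsOpenCover U) {K : Set Y}
    (hK : IsCompact K) (x : X) : ∃ V, IsOpen V ∧ x ∈ V ∧ ∃ 𝒰, IsTubeCover U K V 𝒰 := by
  obtain ⟨𝒰, h𝒰U, h𝒰fin, hcov⟩ := (isCompact_singleton (x := x)).prod hK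
    |>.elim_finite_subcover_image (c := fun u => u) hU.1
      (by rw [← sUnion_eq_biUnion, hU.2]; exact subset_univ _)
  rw [← sUnion_eq_biUnion] at hcov
  set 𝒰' := {u ∈ 𝒰 | ({x} ×ˢ K ∩ u).Nonempty}
  have hcov' : {x} ×ˢ K ⊆ ⋃₀ 𝒰' := fun p hp =>
    let ⟨u, hu, hpu⟩ := hcov hp
    ⟨u, ⟨hu, p, hp, hpu⟩, hpu⟩
  have h𝒰'U : 𝒰' ⊆ U := fun u hu => h𝒰U hu.1
  have h𝒰'fin : 𝒰'.Finite := h𝒰fin.subset fun u hu => hu.1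
  obtain ⟨V, W, hV, -, hxV, hKW, hVW⟩ := generalized_tube_lemma isCompact_singleton hK
    (isOpen_sUnion fun u hu => hU.1 u (h𝒰'U hu)) hcov'
  refine ⟨V ∩ ⋂ u ∈ 𝒰', {x' | ∃ y ∈ K, (x', y) ∈ u}, ?_, ⟨hxV rfl, ?_⟩, 𝒰', h𝒰'U, h𝒰'fin,
    ?_, ?_⟩
  · exact hV.inter <| h𝒰'fin.isOpen_biInter fun u hu =>
      isOpen_setOf_exists_mem_prod (hU.1 u (h𝒰'U hu)) K
  · simp only [mem_iInter]
    rintro u ⟨-, ⟨x, y⟩, ⟨rfl, hy⟩, hxy⟩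
    exact ⟨y, hy, hxy⟩
  · exact (prod_mono inter_subset_left hKW).trans hVW
  · intro u hu x' hx'
    exact mem_iInter₂.1 hx'.2 u hu

def tubeCover (U : Set (Set (X × Y))) (K : Set Y) : Set (Set X) :=
  {V | IsOpen V ∧ ∃ 𝒰, IsTubeCover U K V 𝒰}

theorem isOpenCover_tubeCover {U : Set (Set (X × Y))} (hU : IsOpenCover U) {K : Set Y}
    (hK : IsCompact K) : IsOpenCover (tubeCover U K) := by
  refine ⟨fun V hV => hV.1, eq_univ_of_forall fun x => ?_⟩
  obtain ⟨V, hV, hxV, h𝒰⟩ := exists_isTubeCover hU hK x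
  exact ⟨V, ⟨hV, h𝒰⟩, hxV⟩

theorem StarScheepers.isStarScheepers_univ_prod (hX : StarScheepers X) {K : Set Y}
    (hK : IsCompact K) : IsStarScheepers (univ ×ˢ K : Set (X × Y)) := by
  intro U hU
  obtain ⟨W, hW, hWstar⟩ :=
    hX (fun n => tubeCover (U n) K) fun n => isOpenCover_tubeCover (hU n) hK
  choose 𝒯 h𝒯 using fun n V (hV : V ∈ W n) => ((hW n).1 hV).2
  refine ⟨fun n => ⋃ V, ⋃ hV : V ∈ W n, 𝒯 n V hV, fun n => ⟨?_, ?_⟩, fun F hFK hF => ?_⟩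
  · exact iUnion₂_subset fun V hV => (h𝒯 n V hV).subset
  · exact (hW n).2.biUnion' fun V hV => (h𝒯 n V hV).finite
  · obtain ⟨n, hn⟩ := hWstar (Prod.fst '' F) (hF.image _)
    refine ⟨n, fun p hp => ?_⟩
    obtain ⟨B, ⟨⟨-, 𝒰, h𝒰⟩, q, ⟨V, hVW, hqV⟩, hqB⟩, hpB⟩ := hn (mem_image_of_mem _ hp)
    have hqA : {q} ×ˢ K ⊆ ⋃₀ ⋃ V, ⋃ hV : V ∈ W n, 𝒯 n V hV := fun r hr =>
      sUnion_mono (subset_iUnion₂ V hVW) <|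
        (h𝒯 n V hVW).prod_subset_sUnion (prod_mono (singleton_subset_iff.2 hqV) le_rfl hr)
    exact h𝒰.mem_starOf hqA hqB hpB (hFK hp).2

end Tube

end

theorem stmt_16 {X Y : Type*} [TopologicalSpace X] [TopologicalSpace Y]
    (hX : StarScheepers X) (hY : SigmaCompactSpace Y) :
    StarScheepers (X × Y) := by
  have hunion : (univ : Set (X × Y)) = ⋃ m, univ ×ˢ compactCovering Y m := by
    rw [← prod_iUnion, iUnion_compactCovering, univ_prod_univ]
  have hmono : Monotone fun m => (univ ×ˢ compactCovering Y m : Set (X × Y)) :=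
    fun _ _ h => prod_mono le_rfl (compactCovering_subset Y h)
  rw [← isStarScheepers_univ_iff, hunion]
  exact IsStarScheepers.iUnion hmono.directed_le
    fun m => hX.isStarScheepers_univ_prod (isCompact_compactCovering Y m)
end

section
/- Every T₁ star-Lindelöf space satisfies the discrete countable chain condition (DCCC): every discrete family of nonempty open sets is countable. -/
open Set

/-! Pick a point `p d` in every `d ∈ D`. Since `D` is discrete and `X` is T₁, the set `P` of these
points is closed, so the members of `D` together with the open sets that miss `P` and meet at most
one member of `D` form an open cover. In a star of this cover, `p d` can only be reached through
`d` itself; hence every `d` meets one of the countably many sets `V` given by star-Lindelöfness, and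
each of these meets at most one `d`. -/

open Topology

theorem Set.Countable.of_forall_exists_inter_nonempty {α : Type*} {D V : Set (Set α)}
    (hV : V.Countable)
    (hmeet : ∀ d ∈ D, ∃ v ∈ V, (v ∩ d).Nonempty)
    (hsub : ∀ v ∈ V, {d ∈ D | (v ∩ d).Nonempty}.Subsingleton) : D.Countable := by
  refine (hV.biUnion fun v hv => (hsub v hv).countable).mono fun d hd => ?_
  obtain ⟨v, hv, hvd⟩ := hmeet d hd
  exact mem_biUnion hv ⟨hd, hvd⟩

section DiscreteFamily

variable {X : Type*} [TopologicalSpace X]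

def IsDiscreteFamily (D : Set (Set X)) : Prop :=
  ∀ x : X, ∃ N ∈ 𝓝 x, {d ∈ D | (N ∩ d).Nonempty}.Subsingleton

namespace IsDiscreteFamily

variable {D : Set (Set X)}

theorem eq_of_inter_nonempty (hD : IsDiscreteFamily D) {d e : Set X} (hd : d ∈ D) (he : e ∈ D)
    (hde : (d ∩ e).Nonempty) : d = e := by
  obtain ⟨x, hxd, hxe⟩ := hde
  obtain ⟨N, hN, hNs⟩ := hD x
  exact hNs ⟨hd, x, mem_of_mem_nhds hN, hxd⟩ ⟨he, x, mem_of_mem_nhds hN, hxe⟩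

theorem locallyFinite (hD : IsDiscreteFamily D) : LocallyFinite ((↑) : D → Set X) := by
  intro x
  obtain ⟨N, hN, hNs⟩ := hD x
  refine ⟨N, hN, Set.Subsingleton.finite fun d hd e he => Subtype.ext ?_⟩
  exact hNs ⟨d.2, inter_comm _ _ ▸ hd⟩ ⟨e.2, inter_comm _ _ ▸ he⟩

theorem isClosed_range [T1Space X] (hD : IsDiscreteFamily D) (p : D → X)
    (hp : ∀ d : D, p d ∈ (d : Set X)) : IsClosed (range p) := by
  rw [← iUnion_singleton_eq_range]
  exact (hD.locallyFinite.subset fun d => singleton_subset_iff.2 (hp d)).isClosed_iUnion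
    fun _ => isClosed_singleton

end IsDiscreteFamily

def discreteFamilyCover (D : Set (Set X)) (P : Set X) : Set (Set X) :=
  D ∪ {u | IsOpen u ∧ Disjoint u P ∧ {d ∈ D | (u ∩ d).Nonempty}.Subsingleton}

section discreteFamilyCover

variable {D : Set (Set X)} {P : Set X}

theorem isOpenCover_discreteFamilyCover (hD : IsDiscreteFamily D) (hopen : ∀ d ∈ D, IsOpen d)
    (hP : IsClosed P) (hPD : P ⊆ ⋃₀ D) : IsOpenCover (discreteFamilyCover D P) := by
  refine ⟨fun u hu => hu.elim (hopen u) fun hu => hu.1, eq_univ_of_forall fun x => ?_⟩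
  by_cases hx : x ∈ P
  · obtain ⟨d, hd, hxd⟩ := hPD hx
    exact ⟨d, Or.inl hd, hxd⟩
  obtain ⟨N, hN, hNs⟩ := hD x
  refine ⟨interior N \ P, Or.inr ⟨isOpen_interior.sdiff hP, disjoint_sdiff_left, ?_⟩,
    mem_interior_iff_mem_nhds.2 hN, hx⟩
  exact hNs.anti fun d hd => ⟨hd.1, hd.2.mono (inter_subset_inter_left _
    (sdiff_subset.trans interior_subset))⟩

theorem subsingleton_of_mem_discreteFamilyCover (hD : IsDiscreteFamily D) {u : Set X}
    (hu : u ∈ discreteFamilyCover D P) : {d ∈ D | (u ∩ d).Nonempty}.Subsingleton := by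
  rcases hu with hu | hu
  · exact fun d hd e he => (hD.eq_of_inter_nonempty hu hd.1 hd.2).symm.trans
      (hD.eq_of_inter_nonempty hu he.1 he.2)
  · exact hu.2.2

theorem inter_nonempty_of_starOf_discreteFamilyCover (hD : IsDiscreteFamily D) {A : Set X}
    (hstar : starOf A (discreteFamilyCover D P) = univ) {d : Set X} (hd : d ∈ D) {x : X}
    (hxP : x ∈ P) (hxd : x ∈ d) : (A ∩ d).Nonempty := by
  obtain ⟨B, ⟨hB, hAB⟩, hxB⟩ := hstar.symm ▸ mem_univ x
  rcases hB with hB | hB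
  · rwa [← hD.eq_of_inter_nonempty hB hd ⟨x, hxB, hxd⟩]
  · exact absurd hxP (hB.2.1.notMem_of_mem_left hxB)

end discreteFamilyCover

end DiscreteFamily

theorem stmt_17 {X : Type*} [TopologicalSpace X] [T1Space X]
    (hSL : ∀ U : Set (Set X), IsOpenCover U →
      ∃ V ⊆ U, V.Countable ∧ starOf (⋃₀ V) U = Set.univ)
    (D : Set (Set X)) (hD : ∀ d ∈ D, IsOpen d ∧ d.Nonempty)
    (hdisc : ∀ x : X, ∃ N ∈ nhds x, {d ∈ D | (N ∩ d).Nonempty}.Subsingleton) :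
    D.Countable := by
  have hdisc : IsDiscreteFamily D := hdisc
  choose p hp using fun d : D => (hD d d.2).2
  obtain ⟨V, hVU, hV, hstar⟩ := hSL _ <| isOpenCover_discreteFamilyCover hdisc
    (fun d hd => (hD d hd).1) (hdisc.isClosed_range p hp)
    (range_subset_iff.2 fun d => ⟨d, d.2, hp d⟩)
  refine hV.of_forall_exists_inter_nonempty (fun d hd => ?_)
    fun v hv => subsingleton_of_mem_discreteFamilyCover hdisc (hVU hv)
  obtain ⟨x, ⟨v, hv, hxv⟩, hxd⟩ :=
    inter_nonempty_of_starOf_discreteFamilyCover hdisc hstar hd ⟨⟨d, hd⟩, rfl⟩ (hp ⟨d, hd⟩)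
  exact ⟨v, hv, x, hxv, hxd⟩
end

section
/- Suppose D is an uncountable subset of a space X that is closed, and there exists a locally countable separation of D, i.e., a pairwise disjoint family {U_d : d ∈ D} of open sets with d ∈ U_d such that every point of X has a neighbourhood meeting only countably many U_d. Then X is not star-Lindelöf. -/
open Set

/-!
Cover `X` by the sets `U d` (`d ∈ D`) together with the sets `O \ D`, where `O` ranges over open
sets meeting only countably many `U d`. A point `d ∈ D` lies in no member of this cover other than
`U d`, so the star of a subfamily contains `d` only if the subfamily meets `U d`. A countable
subfamily meets only countably many `U d`, hence its star misses a point of the uncountable `D`.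
-/

section SeparationCover

variable {X : Type*} {D : Set X} {U : X → Set X}

lemma mem_starOf {A : Set X} {W : Set (Set X)} {x : X} :
    x ∈ starOf A W ↔ ∃ B ∈ W, (A ∩ B).Nonempty ∧ x ∈ B := by
  simp [starOf, and_assoc]

lemma setOf_inter_nonempty_mono {A B : Set X} (h : A ⊆ B) :
    {d ∈ D | (A ∩ U d).Nonempty} ⊆ {d ∈ D | (B ∩ U d).Nonempty} :=
  fun _ ⟨hd, hne⟩ => ⟨hd, hne.mono (inter_subset_inter_left _ h)⟩

lemma countable_setOf_sUnion_inter_nonempty {V : Set (Set X)} (hV : V.Countable)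
    (h : ∀ B ∈ V, {d ∈ D | (B ∩ U d).Nonempty}.Countable) :
    {d ∈ D | (⋃₀ V ∩ U d).Nonempty}.Countable := by
  refine (hV.biUnion h).mono ?_
  rintro d ⟨hd, z, ⟨B, hB, hzB⟩, hzU⟩
  exact mem_biUnion hB ⟨hd, z, hzB, hzU⟩

def separationCover (D : Set X) (U O : X → Set X) : Set (Set X) :=
  U '' D ∪ range fun x => O x \ D

variable {O : X → Set X}

lemma isOpenCover_separationCover [TopologicalSpace X] (hD : IsClosed D)
    (hUopen : ∀ d ∈ D, IsOpen (U d)) (hUmem : ∀ d ∈ D, d ∈ U d)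
    (hOopen : ∀ x, IsOpen (O x)) (hOmem : ∀ x, x ∈ O x) :
    IsOpenCover (separationCover D U O) := by
  refine ⟨?_, eq_univ_of_forall fun x => ?_⟩
  · rintro _ (⟨d, hd, rfl⟩ | ⟨x, rfl⟩)
    · exact hUopen d hd
    · exact (hOopen x).sdiff hD
  · by_cases hx : x ∈ D
    · exact ⟨U x, Or.inl ⟨x, hx, rfl⟩, hUmem x hx⟩
    · exact ⟨O x \ D, Or.inr ⟨x, rfl⟩, hOmem x, hx⟩

lemma inter_nonempty_of_mem_starOf_separationCover (hdisj : D.PairwiseDisjoint U)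
    (hUmem : ∀ d ∈ D, d ∈ U d) {A : Set X} {d : X} (hd : d ∈ D)
    (h : d ∈ starOf A (separationCover D U O)) : (A ∩ U d).Nonempty := by
  obtain ⟨B, hB, hAB, hdB⟩ := mem_starOf.mp h
  rcases hB with ⟨e, he, rfl⟩ | ⟨x, rfl⟩
  · rwa [hdisj.elim_set hd he d (hUmem d hd) hdB]
  · exact absurd hd hdB.2

lemma countable_setOf_sUnion_inter_nonempty_of_subset_separationCover
    (hdisj : D.PairwiseDisjoint U) (hO : ∀ x, {d ∈ D | (O x ∩ U d).Nonempty}.Countable)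
    {V : Set (Set X)} (hVW : V ⊆ separationCover D U O) (hV : V.Countable) :
    {d ∈ D | (⋃₀ V ∩ U d).Nonempty}.Countable := by
  refine countable_setOf_sUnion_inter_nonempty hV fun B hB => ?_
  rcases hVW hB with ⟨e, he, rfl⟩ | ⟨x, rfl⟩
  · refine (countable_singleton e).mono ?_
    rintro d ⟨hd, z, hze, hzd⟩
    exact hdisj.elim_set hd he z hzd hze
  · exact (hO x).mono (setOf_inter_nonempty_mono sdiff_subset)

end SeparationCover

theorem stmt_18 {X : Type*} [TopologicalSpace X]
    (D : Set X) (hDc : ¬ D.Countable) (hDcl : IsClosed D)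
    (U : X → Set X)
    (hUopen : ∀ d ∈ D, IsOpen (U d)) (hUmem : ∀ d ∈ D, d ∈ U d)
    (hUdisj : ∀ d ∈ D, ∀ e ∈ D, d ≠ e → Disjoint (U d) (U e))
    (hloc : ∀ x : X, ∃ N ∈ nhds x, {d ∈ D | (N ∩ U d).Nonempty}.Countable) :
    ¬ (∀ W : Set (Set X), IsOpenCover W →
        ∃ V ⊆ W, V.Countable ∧ starOf (⋃₀ V) W = Set.univ) := by
  intro h
  have hdisj : D.PairwiseDisjoint U := hUdisj
  have hO : ∀ x, ∃ O, IsOpen O ∧ x ∈ O ∧ {d ∈ D | (O ∩ U d).Nonempty}.Countable := by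
    intro x
    obtain ⟨N, hN, hNc⟩ := hloc x
    obtain ⟨O, hON, hOopen, hxO⟩ := mem_nhds_iff.mp hN
    exact ⟨O, hOopen, hxO, hNc.mono (setOf_inter_nonempty_mono hON)⟩
  choose O hOopen hOmem hOcount using hO
  obtain ⟨V, hVW, hVc, hVstar⟩ :=
    h _ (isOpenCover_separationCover hDcl hUopen hUmem hOopen hOmem)
  obtain ⟨d, hd, hdV⟩ : ∃ d ∈ D, d ∉ {d ∈ D | (⋃₀ V ∩ U d).Nonempty} :=
    not_subset.mp fun hsub => hDc <|
      (countable_setOf_sUnion_inter_nonempty_of_subset_separationCover hdisj hOcount hVW hVc).mono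
        hsub
  exact hdV ⟨hd, inter_nonempty_of_mem_starOf_separationCover hdisj hUmem hd (hVstar ▸ mem_univ d)⟩
end
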